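/- arXiv:2011.14643 — 6 statements merged into one kernel-verified Lean document; each statement's English description precedes it below -/
import Mathlib

section
/- Let μ_R be the Rayleigh distribution on ℝ (density z·e^{−z²/2}·1_{[0,∞)}(z)) and μ_Θ the uniform probability measure on [0, 2π). Then for every t ∈ ℝ, the pushforward of μ_R ⊗ μ_Θ under the map (z, θ) ↦ z·cos(t − θ) equals the standard Gaussian measure N(0,1) on ℝ. That is, the random variable ξ(t) = ζ·cos(t − θ), with ζ Rayleigh and θ uniform on [0,2π) independent, is normally distributed with mean 0 and variance 1 for every t. -/
open MeasureTheory Set Real ProbabilityTheory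
open scoped ENNReal NNReal

/-!
Box–Muller: in polar coordinates the density `z e^{-z²/2} / (2π) dz dθ` of Rayleigh ⊗ uniform
is `e^{-(x²+y²)/2} / (2π) dx dy`, so `(ζ cos θ, ζ sin θ)` is a pair `(X, Y)` of independent
standard Gaussians. Since `ζ cos (t - θ) = cos t · X + sin t · Y`, it is centred Gaussian with
variance `cos² t + sin² t = 1`.
-/

theorem Function.Periodic.setLIntegral_Ioc_add_eq {T : ℝ} (hT : 0 < T) {f : ℝ → ℝ≥0∞}
    (hf : Function.Periodic f T) (s t : ℝ) :
    ∫⁻ x in Ioc s (s + T), f x = ∫⁻ x in Ioc t (t + T), f x := by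
  have := Fact.mk hT
  simp_rw [← hf.lift_coe, AddCircle.lintegral_preimage]

noncomputable def rayleigh : Measure ℝ :=
  volume.withDensity fun z =>
    ENNReal.ofReal (z * exp (-z ^ 2 / 2) * (Ici (0 : ℝ)).indicator (fun _ => (1 : ℝ)) z)

noncomputable def uniformAngle : Measure ℝ :=
  (ENNReal.ofReal (2 * π))⁻¹ • volume.restrict (Ico 0 (2 * π))

instance : IsProbabilityMeasure uniformAngle where
  measure_univ := by
    rw [uniformAngle, Measure.smul_apply, Measure.restrict_apply_univ, volume_Ico, sub_zero,
      smul_eq_mul, ENNReal.inv_mul_cancel (by simp [pi_pos]) ENNReal.ofReal_ne_top]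

theorem lintegral_rayleigh (g : ℝ → ℝ≥0∞) (hg : Measurable g) :
    ∫⁻ z, g z ∂rayleigh = ∫⁻ z in Ioi 0, ENNReal.ofReal (z * exp (-z ^ 2 / 2)) * g z := by
  have hdens : (fun z : ℝ => ENNReal.ofReal
      (z * exp (-z ^ 2 / 2) * (Ici (0 : ℝ)).indicator (fun _ => (1 : ℝ)) z))
      = (Ici 0).indicator fun z => ENNReal.ofReal (z * exp (-z ^ 2 / 2)) := by
    ext z
    by_cases hz : z ∈ Ici (0 : ℝ) <;> simp [hz]
  rw [rayleigh, hdens, withDensity_indicator measurableSet_Ici,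
    lintegral_withDensity_eq_lintegral_mul _ (by fun_prop) hg,
    setLIntegral_congr Ioi_ae_eq_Ici.symm]
  rfl

theorem lintegral_uniformAngle_of_periodic {g : ℝ → ℝ≥0∞} (hg : Function.Periodic g (2 * π)) :
    ∫⁻ θ, g θ ∂uniformAngle = (ENNReal.ofReal (2 * π))⁻¹ * ∫⁻ θ in Ioo (-π) π, g θ := by
  have h2π : 0 < 2 * π := by positivity
  have hshift := hg.setLIntegral_Ioc_add_eq h2π 0 (-π)
  rw [zero_add, show -π + 2 * π = π by ring] at hshift
  rw [uniformAngle, lintegral_smul_measure, smul_eq_mul, setLIntegral_congr Ico_ae_eq_Ioc,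
    setLIntegral_congr Ioo_ae_eq_Ioc, hshift]

theorem gaussianPDF_mul_gaussianPDF (x y : ℝ) :
    gaussianPDF 0 1 x * gaussianPDF 0 1 y =
      (ENNReal.ofReal (2 * π))⁻¹ * ENNReal.ofReal (exp (-(x ^ 2 + y ^ 2) / 2)) := by
  have h2π : 0 < 2 * π := by positivity
  rw [gaussianPDF, gaussianPDF, ← ENNReal.ofReal_mul (gaussianPDFReal_nonneg 0 1 x),
    ← ENNReal.ofReal_inv_of_pos h2π, ← ENNReal.ofReal_mul (inv_nonneg.2 h2π.le)]
  congr 1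
  have hsqrt : (√(2 * π))⁻¹ * (√(2 * π))⁻¹ = (2 * π)⁻¹ := by
    rw [← mul_inv, Real.mul_self_sqrt h2π.le]
  simp only [gaussianPDFReal, NNReal.coe_one, mul_one, sub_zero]
  rw [mul_mul_mul_comm, ← exp_add, hsqrt]
  ring_nf

theorem lintegral_gaussianReal_prod_eq_polar (f : ℝ × ℝ → ℝ≥0∞) (hf : Measurable f) :
    ∫⁻ p, f p ∂((gaussianReal 0 1).prod (gaussianReal 0 1)) =
      (ENNReal.ofReal (2 * π))⁻¹ * ∫⁻ z in Ioi 0, ENNReal.ofReal (z * exp (-z ^ 2 / 2)) *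
        ∫⁻ θ in Ioo (-π) π, f (polarCoord.symm (z, θ)) := by
  have hc : (ENNReal.ofReal (2 * π))⁻¹ ≠ ∞ := ENNReal.inv_ne_top.2 (by simp [pi_pos])
  rw [gaussianReal_of_var_ne_zero 0 one_ne_zero,
    prod_withDensity (measurable_gaussianPDF 0 1) (measurable_gaussianPDF 0 1),
    ← Measure.volume_eq_prod, lintegral_withDensity_eq_lintegral_mul _ (by fun_prop) hf,
    ← lintegral_comp_polarCoord_symm, polarCoord_target, Measure.volume_eq_prod,
    ← Measure.prod_restrict, lintegral_prod _ (by fun_prop), ← lintegral_const_mul' _ _ hc]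
  refine setLIntegral_congr_fun measurableSet_Ioi fun z hz => ?_
  rw [← lintegral_const_mul' _ _ ENNReal.ofReal_ne_top, ← lintegral_const_mul' _ _ hc]
  refine lintegral_congr fun θ => ?_
  have hnorm : (z * cos θ) ^ 2 + (z * sin θ) ^ 2 = z ^ 2 := by
    linear_combination z ^ 2 * sin_sq_add_cos_sq θ
  simp only [Pi.mul_apply, polarCoord_symm_apply, gaussianPDF_mul_gaussianPDF, hnorm, smul_eq_mul,
    ENNReal.ofReal_mul hz.le]
  ring

theorem map_polarCoord_symm_rayleigh_prod_uniformAngle :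
    (rayleigh.prod uniformAngle).map polarCoord.symm =
      (gaussianReal 0 1).prod (gaussianReal 0 1) := by
  refine Measure.ext_of_lintegral _ fun f hf => ?_
  have hfp : Measurable fun p => f (polarCoord.symm p) := hf.comp (by fun_prop)
  have hperiodic (z : ℝ) : Function.Periodic (fun θ => f (polarCoord.symm (z, θ))) (2 * π) :=
    fun θ => by simp only [polarCoord_symm_apply, cos_add_two_pi, sin_add_two_pi]
  rw [lintegral_map hf (by fun_prop), lintegral_prod _ hfp.aemeasurable,
    lintegral_rayleigh _ (hfp.lintegral_prod_right' (ν := uniformAngle)),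
    lintegral_gaussianReal_prod_eq_polar f hf,
    ← lintegral_const_mul' _ _ (ENNReal.inv_ne_top.2 (by simp [pi_pos]))]
  refine lintegral_congr fun z => ?_
  rw [lintegral_uniformAngle_of_periodic (hperiodic z), mul_left_comm]

theorem gaussianReal_prod_map_linear (m₁ m₂ a b : ℝ) (v₁ v₂ : ℝ≥0) :
    ((gaussianReal m₁ v₁).prod (gaussianReal m₂ v₂)).map (fun p => a * p.1 + b * p.2) =
      gaussianReal (a * m₁ + b * m₂) (⟨a ^ 2, sq_nonneg a⟩ * v₁ + ⟨b ^ 2, sq_nonneg b⟩ * v₂) := by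
  have hsplit : (fun p : ℝ × ℝ => a * p.1 + b * p.2) =
      (fun p => p.1 + p.2) ∘ Prod.map (a * ·) (b * ·) := rfl
  rw [hsplit, ← Measure.map_map (by fun_prop) (by fun_prop),
    ← Measure.map_prod_map _ _ (by fun_prop) (by fun_prop), gaussianReal_map_const_mul,
    gaussianReal_map_const_mul, ← gaussianReal_conv_gaussianReal]
  rfl

/-- The pushforward of (Rayleigh amplitude) ⊗ (uniform phase on `[0,2π)`) under
`(z, θ) ↦ z·cos(t−θ)` is the standard Gaussian measure, for every `t`. -/
theorem rayleigh_uniform_pushforward_gaussian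
    (μR μΘ : Measure ℝ)
    (hμR : μR = volume.withDensity
      (fun z => ENNReal.ofReal
        (z * Real.exp (-z^2/2) * Set.indicator (Ici (0:ℝ)) (fun _ => (1:ℝ)) z)))
    (hμΘ : μΘ = (ENNReal.ofReal (2 * π))⁻¹ • volume.restrict (Ico 0 (2 * π)))
    (t : ℝ) :
    Measure.map (fun p : ℝ × ℝ => p.1 * Real.cos (t - p.2)) (μR.prod μΘ)
      = gaussianReal 0 1 := by
  have hfactor : (fun p : ℝ × ℝ => p.1 * cos (t - p.2)) =
      (fun q : ℝ × ℝ => cos t * q.1 + sin t * q.2) ∘ polarCoord.symm := by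
    ext p
    simp only [Function.comp_apply, polarCoord_symm_apply, cos_sub]
    ring
  rw [show μR = rayleigh from hμR, show μΘ = uniformAngle from hμΘ, hfactor,
    ← Measure.map_map (by fun_prop) (by fun_prop), map_polarCoord_symm_rayleigh_prod_uniformAngle,
    gaussianReal_prod_map_linear]
  congr 1
  · ring
  · ext
    change cos t ^ 2 * 1 + sin t ^ 2 * 1 = 1
    rw [mul_one, mul_one, cos_sq_add_sin_sq]
end

section
/- Let τ > 0 and a, b ∈ ℝ. Define X : ℝ → ℝ by X(t) = 0 for t < 0 and X(t) = Σ_{k=0}^{⌊t/τ⌋} (bᵏ/k!)·(t − kτ)ᵏ·e^{a(t − kτ)} for t ≥ 0. Then X is continuous on [0, ∞), X(0) = 1, and for every t ∈ (0, ∞) with t ≠ τ, X is differentiable at t with X′(t) = a·X(t) + b·X(t − τ). That is, X is the fundamental solution of the linear differential delay equation x′(t) = a·x(t) + b·x(t − τ). -/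
/-! On `[nτ, (n+1)τ)` the solution is the partial sum of the terms
`g_k(t) = bᵏ/k! (t − kτ)ᵏ e^{a(t − kτ)}`, `k ≤ n`, so it is `∑ₖ 1_{t ≥ kτ} g_k(t)`, a sum that is
finite on every half-line `t < Nτ`. Each term solves `g_0' = a g_0` and
`g_{k+1}' = a g_{k+1} + b g_k(· − τ)`. Switching `g_k` on at `kτ` costs nothing there because `g_k`
vanishes to order `k` at `kτ`: the switched term stays continuous for `k ≥ 1` and differentiable
for `k ≥ 2`. Only the jump of `g_0` at `0` and the kink of `g_1` at `τ` remain. -/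

open Set Real Finset

section Indicator

variable {E : Type*} [NormedAddCommGroup E] [NormedSpace ℝ E] {f : ℝ → E} {c t : ℝ}

theorem hasDerivAt_indicator_Ici_of_ne {f' : E} (hf : HasDerivAt f f' t) (ht : t ≠ c) :
    HasDerivAt ((Ici c).indicator f) ((Ici c).indicator (fun _ ↦ f') t) t := by
  rcases ht.lt_or_gt with ht | ht
  · rw [indicator_of_notMem (notMem_Ici.2 ht)]
    refine (hasDerivAt_const t (0 : E)).congr_of_eventuallyEq ?_
    filter_upwards [Iio_mem_nhds ht] with s hs
    exact indicator_of_notMem (notMem_Ici.2 hs) f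
  · rw [indicator_of_mem (Set.mem_Ici.2 ht.le)]
    refine hf.congr_of_eventuallyEq ?_
    filter_upwards [Ioi_mem_nhds ht] with s hs
    exact indicator_of_mem (Set.mem_Ici.2 hs.le) f

theorem hasDerivAt_indicator_Ici_self (hf : HasDerivAt f 0 c) (hc : f c = 0) :
    HasDerivAt ((Ici c).indicator f) 0 c := by
  have hc' : (Ici c).indicator f c = 0 := by rw [indicator_of_mem self_mem_Ici, hc]
  have hleft : HasDerivWithinAt ((Ici c).indicator f) 0 (Iic c) c :=
    (hasDerivWithinAt_const c _ (0 : E)).congr (fun s hs ↦ by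
      rcases (Set.mem_Iic.1 hs).lt_or_eq with hs | rfl
      · exact indicator_of_notMem (notMem_Ici.2 hs) f
      · exact hc') hc'
  have hright : HasDerivWithinAt ((Ici c).indicator f) 0 (Ici c) c :=
    hf.hasDerivWithinAt.congr (fun s hs ↦ indicator_of_mem hs f) (indicator_of_mem self_mem_Ici f)
  simpa only [Iic_union_Ici, hasDerivWithinAt_univ] using hleft.union hright

end Indicator

theorem continuous_indicator_Ici {α M : Type*} [TopologicalSpace α] [LinearOrder α]
    [OrderTopology α] [DenselyOrdered α] [NoMinOrder α] [TopologicalSpace M] [Zero M]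
    {f : α → M} {c : α} (hf : Continuous f) (hc : f c = 0) :
    Continuous ((Ici c).indicator f) := by
  classical
  rw [← piecewise_eq_indicator]
  exact hf.piecewise (by simp [hc]) continuous_const

namespace LinearDDE

variable (τ a b : ℝ)

noncomputable def term (k : ℕ) (t : ℝ) : ℝ :=
  b ^ k / (Nat.factorial k) * (t - k * τ) ^ k * Real.exp (a * (t - k * τ))

theorem hasDerivAt_term_zero (t : ℝ) : HasDerivAt (term τ a b 0) (a * term τ a b 0 t) t := by
  have h : term τ a b 0 = fun s ↦ Real.exp (a * s) := by ext s; simp [term]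
  rw [h]
  simpa [mul_comm] using ((hasDerivAt_id t).const_mul a).exp

theorem hasDerivAt_term_succ (k : ℕ) (t : ℝ) :
    HasDerivAt (term τ a b (k + 1)) (a * term τ a b (k + 1) t + b * term τ a b k (t - τ)) t := by
  have hlin : HasDerivAt (fun s : ℝ ↦ s - (k + 1 : ℕ) * τ) 1 t := (hasDerivAt_id t).sub_const _
  have h := ((hlin.fun_pow (k + 1)).fun_mul (hlin.const_mul a).exp).const_mul
    (b ^ (k + 1) / (k + 1).factorial)
  have hfun : term τ a b (k + 1) = fun s ↦ b ^ (k + 1) / (k + 1).factorial *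
      ((s - (k + 1 : ℕ) * τ) ^ (k + 1) * exp (a * (s - (k + 1 : ℕ) * τ))) := by
    funext s; simp only [term]; ring
  rw [hfun]
  refine h.congr_deriv ?_
  have hshift : t - τ - k * τ = t - (k + 1 : ℕ) * τ := by push_cast; ring
  simp only [term, hshift, Nat.factorial_succ, add_tsub_cancel_right]
  push_cast
  field_simp
  ring

theorem term_self {k : ℕ} (hk : k ≠ 0) : term τ a b k (k * τ) = 0 := by
  simp [term, hk]

noncomputable def switchedTerm (k : ℕ) : ℝ → ℝ :=
  (Ici (k * τ)).indicator (term τ a b k)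

noncomputable def fundamentalSolution (t : ℝ) : ℝ :=
  if t < 0 then 0 else ∑ k ∈ range ((⌊t / τ⌋).toNat + 1), term τ a b k t

variable {τ a b}

theorem hasDerivAt_switchedTerm_zero {t : ℝ} (ht : t ≠ 0) :
    HasDerivAt (switchedTerm τ a b 0) (a * switchedTerm τ a b 0 t) t := by
  refine (hasDerivAt_indicator_Ici_of_ne (hasDerivAt_term_zero τ a b t)
    (c := ((0 : ℕ) : ℝ) * τ) (by simpa using ht)).congr_deriv ?_
  simp only [switchedTerm, indicator_apply]
  split_ifs <;> simp

theorem hasDerivAt_switchedTerm_succ {k : ℕ} {t : ℝ} (h : k = 0 → t ≠ τ) :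
    HasDerivAt (switchedTerm τ a b (k + 1))
      (a * switchedTerm τ a b (k + 1) t + b * switchedTerm τ a b k (t - τ)) t := by
  by_cases ht : t = (k + 1 : ℕ) * τ
  · have hk : k ≠ 0 := fun hk ↦ h hk (by simpa [hk] using ht)
    have hnode : t - τ = k * τ := by rw [ht]; push_cast; ring
    have hterm : term τ a b (k + 1) t = 0 := ht ▸ term_self τ a b k.succ_ne_zero
    have hterm' : term τ a b k (t - τ) = 0 := hnode ▸ term_self τ a b hk
    have hderiv := hasDerivAt_term_succ τ a b k t
    rw [hterm, hterm', mul_zero, mul_zero, add_zero] at hderiv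
    have hval : a * switchedTerm τ a b (k + 1) t + b * switchedTerm τ a b k (t - τ) = 0 := by
      simp only [switchedTerm, indicator_apply]
      split_ifs <;> simp [hterm, hterm']
    rw [ht] at hderiv hterm
    rw [hval, ht]
    exact hasDerivAt_indicator_Ici_self hderiv hterm
  · refine (hasDerivAt_indicator_Ici_of_ne (hasDerivAt_term_succ τ a b k t) ht).congr_deriv ?_
    have hshift : (k + 1 : ℕ) * τ ≤ t ↔ k * τ ≤ t - τ := by
      push_cast
      constructor <;> intro <;> linarith
    simp only [switchedTerm, indicator_apply, Set.mem_Ici, hshift]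
    split_ifs <;> simp

theorem hasDerivAt_sum_switchedTerm {t : ℝ} (ht₀ : t ≠ 0) (htτ : t ≠ τ) (n : ℕ) :
    HasDerivAt (fun s ↦ ∑ k ∈ range (n + 1), switchedTerm τ a b k s)
      (a * ∑ k ∈ range (n + 1), switchedTerm τ a b k t
        + b * ∑ k ∈ range n, switchedTerm τ a b k (t - τ)) t := by
  induction n with
  | zero => simpa using hasDerivAt_switchedTerm_zero ht₀
  | succ n ih =>
    simp only [sum_range_succ _ (n + 1)]
    refine (ih.add (hasDerivAt_switchedTerm_succ fun _ ↦ htτ)).congr_deriv ?_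
    rw [sum_range_succ (fun k ↦ switchedTerm τ a b k (t - τ)) n]
    ring

theorem fundamentalSolution_eq_sum (hτ : 0 < τ) {n : ℕ} {t : ℝ} (ht : t < n * τ) :
    fundamentalSolution τ a b t = ∑ k ∈ range n, switchedTerm τ a b k t := by
  rw [fundamentalSolution]
  split_ifs with h₀
  · refine (sum_eq_zero fun k _ ↦ indicator_of_notMem ?_ _).symm
    exact notMem_Ici.2 (h₀.trans_le (by positivity))
  · have hrange : {k ∈ Finset.range n | ((k : ℕ) : ℝ) * τ ≤ t} = Finset.range (⌊t / τ⌋₊ + 1) := by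
      ext k
      have hk : (k : ℝ) * τ ≤ t ↔ k ≤ ⌊t / τ⌋₊ := by
        rw [Nat.le_floor_iff (div_nonneg (not_lt.1 h₀) hτ.le), le_div_iff₀ hτ]
      have hkn : (k : ℝ) * τ ≤ t → k < n := fun h ↦ by
        exact_mod_cast lt_of_mul_lt_mul_right (h.trans_lt ht) hτ.le
      simp only [Finset.mem_filter, Finset.mem_range, Nat.lt_succ_iff, hk]
      exact ⟨And.right, fun h ↦ ⟨hkn (hk.2 h), h⟩⟩
    simp only [switchedTerm, indicator_apply, Set.mem_Ici, ← sum_filter, hrange, Int.floor_toNat]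

theorem fundamentalSolution_eventuallyEq_sum (hτ : 0 < τ) {n : ℕ} {t : ℝ} (ht : t < n * τ) :
    fundamentalSolution τ a b =ᶠ[nhds t] fun s ↦ ∑ k ∈ range n, switchedTerm τ a b k s := by
  filter_upwards [Iio_mem_nhds ht] with s hs using fundamentalSolution_eq_sum hτ hs

theorem hasDerivAt_fundamentalSolution (hτ : 0 < τ) {t : ℝ} (ht₀ : 0 < t) (htτ : t ≠ τ) :
    HasDerivAt (fundamentalSolution τ a b)
      (a * fundamentalSolution τ a b t + b * fundamentalSolution τ a b (t - τ)) t := by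
  obtain ⟨n, hn⟩ := exists_lt_nsmul hτ t
  rw [nsmul_eq_mul] at hn
  have hn' : t < (n + 1 : ℕ) * τ := by push_cast; linarith
  rw [fundamentalSolution_eq_sum hτ hn', fundamentalSolution_eq_sum hτ (n := n) (by linarith)]
  exact (hasDerivAt_sum_switchedTerm ht₀.ne' htτ n).congr_of_eventuallyEq
    (fundamentalSolution_eventuallyEq_sum hτ hn')

theorem continuousOn_sum_switchedTerm (n : ℕ) :
    ContinuousOn (fun s ↦ ∑ k ∈ range n, switchedTerm τ a b k s) (Ici 0) := by
  refine continuousOn_finsetSum _ fun k _ ↦ ?_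
  have hterm : Continuous (term τ a b k) := by unfold term; fun_prop
  rcases k with _ | k
  · refine hterm.continuousOn.congr fun s hs ↦ indicator_of_mem ?_ _
    simpa using hs
  · exact (continuous_indicator_Ici hterm (term_self τ a b k.succ_ne_zero)).continuousOn

theorem continuousOn_fundamentalSolution (hτ : 0 < τ) :
    ContinuousOn (fundamentalSolution τ a b) (Ici 0) := fun t ht ↦ by
  obtain ⟨n, hn⟩ := exists_lt_nsmul hτ t
  rw [nsmul_eq_mul] at hn
  have heq := fundamentalSolution_eventuallyEq_sum (a := a) (b := b) hτ hn
  exact (continuousOn_sum_switchedTerm n t ht).congr_of_eventuallyEq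
    (eventually_nhdsWithin_of_eventually_nhds heq) heq.eq_of_nhds

theorem fundamentalSolution_zero : fundamentalSolution τ a b 0 = 1 := by
  simp [fundamentalSolution, term]

end LinearDDE

open LinearDDE in
/-- The explicit series `X(t) = Σ_{k=0}^{⌊t/τ⌋} (bᵏ/k!)(t−kτ)ᵏ e^{a(t−kτ)}` (and `X = 0`
for `t < 0`) is the fundamental solution of `x′(t) = a·x(t) + b·x(t−τ)`: it is continuous
on `[0,∞)`, `X(0) = 1`, and satisfies the delay equation at every `t > 0`, `t ≠ τ`. -/
theorem fundamental_solution_linear_dde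
    (τ a b : ℝ) (hτ : 0 < τ)
    (X : ℝ → ℝ)
    (hX : ∀ t, X t = if t < 0 then 0 else
      ∑ k ∈ Finset.range ((⌊t / τ⌋).toNat + 1),
        b ^ k / (Nat.factorial k) * (t - k * τ) ^ k * Real.exp (a * (t - k * τ))) :
    ContinuousOn X (Ici 0) ∧ X 0 = 1 ∧
      ∀ t, 0 < t → t ≠ τ → HasDerivAt X (a * X t + b * X (t - τ)) t := by
  obtain rfl : X = fundamentalSolution τ a b := funext hX
  exact ⟨continuousOn_fundamentalSolution hτ, fundamentalSolution_zero,
    fun _ ht htτ ↦ hasDerivAt_fundamentalSolution hτ ht htτ⟩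
end

section
/- Let τ > 0, b ∈ ℝ, a ≠ 0 and t ∈ [0, τ]. Then ∫_{−τ}^0 ( e^{a t} + (b/a)·( e^{a·max(t − r − τ, 0)} − 1 ) )² dr = e^{2at}·τ + (2b/a²)·e^{at}·( e^{at} − 1 − a t ) + (b²/(2a³))·( (e^{at} − 1)² − 2( e^{at} − 1 − a t ) ). (This computes the variance σ²(t) = ∫_{−τ}^0 (S_t η_r(0))² dr of the solution of x′(t) = a·x(t) + b·x(t−τ) with standard Wiener initial data on [−τ,0].) -/
open MeasureTheory Set Real

/-! The substitution `u = t - r - τ` maps `[-τ, 0]` onto `[t - τ, t]`; on `[t - τ, 0]` the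
`max` vanishes and the integrand is the constant `e^{2at}`, while on `[0, t]` it is the square of
`e^{at} - b/a + (b/a) e^{au}`, which has an elementary antiderivative. -/

theorem integral_comp_max_sub_sub_zero {h : ℝ → ℝ} (hh : Continuous h) {t τ : ℝ}
    (ht : 0 ≤ t) (htτ : t ≤ τ) :
    ∫ r in (-τ)..0, h (max (t - r - τ) 0) = (τ - t) * h 0 + ∫ u in 0..t, h u := by
  have hmax : Continuous fun u => h (max u 0) := by fun_prop
  have hsubst : ∫ r in (-τ)..0, h (max (t - r - τ) 0) = ∫ u in (t - τ)..t, h (max u 0) := by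
    simpa [sub_right_comm] using
      intervalIntegral.integral_comp_sub_left (fun u => h (max u 0)) (t - τ) (a := -τ) (b := 0)
  rw [hsubst, ← intervalIntegral.integral_add_adjacent_intervals (b := 0)
    (hmax.intervalIntegrable _ _) (hmax.intervalIntegrable _ _)]
  congr 1
  · rw [intervalIntegral.integral_congr (g := fun _ => h 0), intervalIntegral.integral_const,
      smul_eq_mul]
    · ring
    · intro u hu
      rw [uIcc_of_le (by linarith)] at hu
      simp [max_eq_right hu.2]
  · refine intervalIntegral.integral_congr fun u hu => ?_
    rw [uIcc_of_le ht] at hu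
    simp [max_eq_left hu.1]

theorem integral_sq_add_mul_exp (c d : ℝ) {a : ℝ} (ha : a ≠ 0) (t : ℝ) :
    ∫ u in 0..t, (c + d * exp (a * u)) ^ 2
      = c ^ 2 * t + 2 * c * d * (exp (a * t) - 1) / a
        + d ^ 2 * (exp (2 * a * t) - 1) / (2 * a) := by
  have hderiv : ∀ u, HasDerivAt
      (fun u => c ^ 2 * u + 2 * c * d * exp (a * u) / a + d ^ 2 * exp (2 * a * u) / (2 * a))
      ((c + d * exp (a * u)) ^ 2) u := by
    intro u
    have hexp : exp (2 * a * u) = exp (a * u) ^ 2 := by rw [← exp_nat_mul]; ring_nf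
    have h1 := ((hasDerivAt_id' u).const_mul a).exp
    have h2 := ((hasDerivAt_id' u).const_mul (2 * a)).exp
    refine ((((hasDerivAt_id' u).const_mul (c ^ 2)).add
      ((h1.const_mul (2 * c * d)).div_const a)).add
        ((h2.const_mul (d ^ 2)).div_const (2 * a))).congr_deriv ?_
    rw [hexp]
    field_simp
    ring
  rw [intervalIntegral.integral_eq_sub_of_hasDerivAt (fun u _ => hderiv u)
    ((by fun_prop : Continuous fun u => (c + d * exp (a * u)) ^ 2).intervalIntegrable _ _)]
  simp only [mul_zero, exp_zero, mul_one, zero_add]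
  ring

theorem variance_dde_wiener_initial_a_ne_zero_general
    (τ a b : ℝ) (ha : a ≠ 0) (t : ℝ) (ht : t ∈ Icc 0 τ) :
    ∫ r in (-τ)..0,
        (Real.exp (a * t) + (b / a) * (Real.exp (a * max (t - r - τ) 0) - 1))^2
      = Real.exp (2 * a * t) * τ
        + (2 * b / a^2) * Real.exp (a * t) * (Real.exp (a * t) - 1 - a * t)
        + (b^2 / (2 * a^3)) *
            ((Real.exp (a * t) - 1)^2 - 2 * (Real.exp (a * t) - 1 - a * t)) := by
  have hintegrand : (fun u => (exp (a * t) + b / a * (exp (a * u) - 1)) ^ 2)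
      = fun u => (exp (a * t) - b / a + b / a * exp (a * u)) ^ 2 := by
    funext u; ring
  have hexp : exp (2 * a * t) = exp (a * t) ^ 2 := by rw [← exp_nat_mul]; ring_nf
  rw [integral_comp_max_sub_sub_zero
      (h := fun u => (exp (a * t) + b / a * (exp (a * u) - 1)) ^ 2) (by fun_prop) ht.1 ht.2,
    hintegrand, integral_sq_add_mul_exp _ _ ha, hexp]
  simp only [mul_zero, exp_zero, sub_self, add_zero]
  field_simp
  ring

/-- Variance of the solution of `x′(t) = a·x(t) + b·x(t−τ)` (case `a ≠ 0`) with standard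
Wiener initial data, for `t ∈ [0,τ]`. -/
theorem variance_dde_wiener_initial_a_ne_zero
    (τ a b : ℝ) (hτ : 0 < τ) (ha : a ≠ 0) (t : ℝ) (ht : t ∈ Icc 0 τ) :
    ∫ r in (-τ)..0,
        (Real.exp (a * t) + (b / a) * (Real.exp (a * max (t - r - τ) 0) - 1))^2
      = Real.exp (2 * a * t) * τ
        + (2 * b / a^2) * Real.exp (a * t) * (Real.exp (a * t) - 1 - a * t)
        + (b^2 / (2 * a^3)) *
            ((Real.exp (a * t) - 1)^2 - 2 * (Real.exp (a * t) - 1 - a * t)) :=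
  variance_dde_wiener_initial_a_ne_zero_general τ a b ha t ht
end

section
/- Let τ > 0, b ∈ ℝ, a ≠ 0, −τ ≤ s₁ ≤ s₂ ≤ 0 and −s₂ < t ≤ −s₁. Then ∫_{−τ}^0 1_{(−∞, t+s₁]}(r) · ( e^{a(t+s₂)} + (b/a)·( e^{a·max(t + s₂ − r − τ, 0)} − 1 ) ) dr = e^{a(t+s₂)}·(t + s₁ + τ) + (b/a²)·( e^{a(t+s₂)} − 1 − a·(t + s₂) ). (This is the covariance R_t(s₁, s₂) for the solution of x′(t) = a·x(t) + b·x(t−τ) with standard Wiener initial data, in the range −s₂ < t ≤ −s₁.) -/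
/-!
The indicator cuts the integral down to `[-τ, t + s₁]`. The delayed term
`exp (a * max (m - r) 0) - 1`, with `m = t + s₂ - τ`, vanishes for `r ≥ m`, and on `[-τ, m]` it is
`exp (a * (m - r)) - 1`, whose integral is elementary; note `m + τ = t + s₂`.
-/

open MeasureTheory Set Real

theorem integral_exp_mul_sub {a : ℝ} (ha : a ≠ 0) (α m : ℝ) :
    ∫ r in α..m, exp (a * (m - r)) = (exp (a * (m - α)) - 1) / a := by
  rw [intervalIntegral.integral_comp_sub_left (fun x => exp (a * x)),
    intervalIntegral.integral_comp_mul_left (fun x => exp x) ha, integral_exp]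
  simp [div_eq_inv_mul]

theorem integral_exp_mul_max_sub_sub_one {a α m c : ℝ} (ha : a ≠ 0) (hαm : α ≤ m)
    (hmc : m ≤ c) :
    ∫ r in α..c, (exp (a * max (m - r) 0) - 1) = (exp (a * (m - α)) - 1 - a * (m - α)) / a := by
  have hcont : Continuous fun r => exp (a * max (m - r) 0) - 1 := by fun_prop
  rw [← intervalIntegral.integral_add_adjacent_intervals (hcont.intervalIntegrable α m)
    (hcont.intervalIntegrable m c)]
  have hleft : EqOn (fun r => exp (a * max (m - r) 0) - 1) (fun r => exp (a * (m - r)) - 1)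
      (uIcc α m) := by
    intro r hr
    rw [uIcc_of_le hαm] at hr
    simp only [max_eq_left (sub_nonneg.2 hr.2)]
  have hright : EqOn (fun r => exp (a * max (m - r) 0) - 1) (fun _ => 0) (uIcc m c) := by
    intro r hr
    rw [uIcc_of_le hmc] at hr
    simp [max_eq_right (sub_nonpos.2 hr.1)]
  rw [intervalIntegral.integral_congr hleft, intervalIntegral.integral_congr hright,
    intervalIntegral.integral_sub
      ((by fun_prop : Continuous fun r => exp (a * (m - r))).intervalIntegrable α m)
      intervalIntegrable_const,
    integral_exp_mul_sub ha, intervalIntegral.integral_const, intervalIntegral.integral_zero,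
    smul_eq_mul, mul_one, add_zero]
  field_simp

theorem covariance_dde_wiener_middle_range_a_ne_zero_general
    (τ a b : ℝ) (ha : a ≠ 0) (s₁ s₂ : ℝ)
    (hs₁ : -τ ≤ s₁) (hs₂ : s₂ ≤ 0)
    (t : ℝ) (ht₁ : -s₂ < t) (ht₂ : t ≤ -s₁) :
    ∫ r in (-τ)..0,
        Set.indicator (Iic (t + s₁)) (fun _ => (1:ℝ)) r
          * (Real.exp (a * (t + s₂))
              + (b / a) * (Real.exp (a * max (t + s₂ - r - τ) 0) - 1))
      = Real.exp (a * (t + s₂)) * (t + s₁ + τ)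
        + (b / a^2) * (Real.exp (a * (t + s₂)) - 1 - a * (t + s₂)) := by
  have hintegrand : ∀ r, indicator (Iic (t + s₁)) (fun _ => (1:ℝ)) r
        * (exp (a * (t + s₂)) + (b / a) * (exp (a * max (t + s₂ - r - τ) 0) - 1))
      = indicator {x | x ≤ t + s₁}
          (fun r => exp (a * (t + s₂)) + (b / a) * (exp (a * max (t + s₂ - τ - r) 0) - 1)) r :=
    fun r => by by_cases hr : r ≤ t + s₁ <;> simp [hr, sub_right_comm]
  rw [intervalIntegral.integral_congr fun r _ => hintegrand r,
    intervalIntegral.integral_indicator ⟨by linarith, by linarith⟩,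
    intervalIntegral.integral_add intervalIntegrable_const
      (Continuous.intervalIntegrable (by fun_prop) _ _),
    intervalIntegral.integral_const_mul,
    integral_exp_mul_max_sub_sub_one ha (by linarith) (by linarith)]
  simp only [intervalIntegral.integral_const, sub_neg_eq_add, smul_eq_mul, sub_add_cancel]
  ring

/-- Covariance `R_t(s₁,s₂)` for `x′(t) = a·x(t) + b·x(t−τ)` (case `a ≠ 0`) with standard
Wiener initial data, in the range `−s₂ < t ≤ −s₁`. -/
theorem covariance_dde_wiener_middle_range_a_ne_zero
    (τ a b : ℝ) (hτ : 0 < τ) (ha : a ≠ 0) (s₁ s₂ : ℝ)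
    (hs₁ : -τ ≤ s₁) (hs₁₂ : s₁ ≤ s₂) (hs₂ : s₂ ≤ 0)
    (t : ℝ) (ht₁ : -s₂ < t) (ht₂ : t ≤ -s₁) :
    ∫ r in (-τ)..0,
        Set.indicator (Iic (t + s₁)) (fun _ => (1:ℝ)) r
          * (Real.exp (a * (t + s₂))
              + (b / a) * (Real.exp (a * max (t + s₂ - r - τ) 0) - 1))
      = Real.exp (a * (t + s₂)) * (t + s₁ + τ)
        + (b / a^2) * (Real.exp (a * (t + s₂)) - 1 - a * (t + s₂)) :=
  covariance_dde_wiener_middle_range_a_ne_zero_general τ a b ha s₁ s₂ hs₁ hs₂ t ht₁ ht₂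
end

section
/- Let τ > 0, b ∈ ℝ, −τ ≤ s₁ ≤ s₂ ≤ 0 and −s₁ < t ≤ τ − s₂. Then ∫_{−τ}^0 ( 1 + b·max(t + s₁ − r − τ, 0) )·( 1 + b·max(t + s₂ − r − τ, 0) ) dr = τ + (b/2)·(t + s₂)² + (b/2)·(t + s₁)² + (b²/3)·(t + s₁)³ + (b²/2)·(t + s₁)²·(s₂ − s₁). (This is the covariance R_t(s₁, s₂) for the solution of x′(t) = b·x(t−τ) (case a = 0) with standard Wiener initial data, in the range t > −s₁.) -/
/-!
Writing `cᵢ = t + sᵢ - τ`, the hypotheses give `-τ ≤ c₁ ≤ c₂ ≤ 0`. As `c₁ ≤ c₂`,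
`(c₁ - r)⁺ (c₂ - r)⁺ = (c₂ - c₁)(c₁ - r)⁺ + ((c₁ - r)⁺)²`, so the integrand is a linear combination
of `1` and powers of the ramps `(c - r)⁺`, and `∫_lo^hi ((c - r)⁺)ⁿ dr = (c - lo)ⁿ⁺¹ / (n + 1)`
whenever `lo ≤ c ≤ hi`.
-/

theorem max_zero_mul_max_zero_of_le {α : Type*} [CommRing α] [LinearOrder α]
    [IsStrictOrderedRing α] {x y : α} (h : x ≤ y) :
    max x 0 * max y 0 = (y - x) * max x 0 + max x 0 ^ 2 := by
  rcases le_total x 0 with hx | hx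
  · rw [max_eq_right hx]; ring
  · rw [max_eq_left hx, max_eq_left (hx.trans h)]; ring

theorem integral_max_sub_zero_pow {lo c hi : ℝ} (hlo : lo ≤ c) (hhi : c ≤ hi) {n : ℕ}
    (hn : n ≠ 0) :
    ∫ r in lo..hi, max (c - r) 0 ^ n = (c - lo) ^ (n + 1) / (n + 1) := by
  have hcont : Continuous fun r : ℝ => max (c - r) 0 ^ n := by fun_prop
  rw [← intervalIntegral.integral_add_adjacent_intervals
    (hcont.intervalIntegrable lo c) (hcont.intervalIntegrable c hi)]
  have hleft : ∫ r in lo..c, max (c - r) 0 ^ n = ∫ r in lo..c, (c - r) ^ n :=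
    intervalIntegral.integral_congr fun r hr => by
      rw [Set.uIcc_of_le hlo] at hr
      rw [max_eq_left (by linarith [hr.2])]
  have hright : ∫ r in c..hi, max (c - r) 0 ^ n = ∫ _ in c..hi, (0 : ℝ) :=
    intervalIntegral.integral_congr fun r hr => by
      rw [Set.uIcc_of_le hhi] at hr
      rw [max_eq_right (by linarith [hr.1]), zero_pow hn]
  rw [hleft, hright, intervalIntegral.integral_comp_sub_left (fun x => x ^ n), integral_pow]
  simp [hn]

theorem integral_one_add_max_mul_one_add_max {lo c₁ c₂ hi : ℝ}
    (h₁ : lo ≤ c₁) (h₁₂ : c₁ ≤ c₂) (h₂ : c₂ ≤ hi) (b : ℝ) :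
    ∫ r in lo..hi, (1 + b * max (c₁ - r) 0) * (1 + b * max (c₂ - r) 0)
      = (hi - lo) + b / 2 * (c₂ - lo) ^ 2 + b / 2 * (c₁ - lo) ^ 2
        + b ^ 2 / 3 * (c₁ - lo) ^ 3 + b ^ 2 / 2 * (c₁ - lo) ^ 2 * (c₂ - c₁) := by
  have hexpand : ∀ r, (1 + b * max (c₁ - r) 0) * (1 + b * max (c₂ - r) 0)
      = 1 + b * max (c₁ - r) 0 ^ 1 + b * max (c₂ - r) 0 ^ 1
        + b ^ 2 * (c₂ - c₁) * max (c₁ - r) 0 ^ 1 + b ^ 2 * max (c₁ - r) 0 ^ 2 := fun r => by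
    linear_combination b ^ 2 * max_zero_mul_max_zero_of_le (sub_le_sub_right h₁₂ r)
  simp_rw [hexpand]
  rw [intervalIntegral.integral_add, intervalIntegral.integral_add, intervalIntegral.integral_add,
    intervalIntegral.integral_add]
  · simp only [intervalIntegral.integral_const_mul, intervalIntegral.integral_const, smul_eq_mul,
      mul_one, integral_max_sub_zero_pow h₁ (h₁₂.trans h₂) one_ne_zero,
      integral_max_sub_zero_pow h₁ (h₁₂.trans h₂) two_ne_zero,
      integral_max_sub_zero_pow (h₁.trans h₁₂) h₂ one_ne_zero]
    ring
  all_goals exact Continuous.intervalIntegrable (by fun_prop) _ _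

theorem covariance_dde_wiener_late_range_a_zero_general
    (τ b : ℝ) (s₁ s₂ : ℝ)
    (hs₁₂ : s₁ ≤ s₂)
    (t : ℝ) (ht₁ : -s₁ < t) (ht₂ : t ≤ τ - s₂) :
    ∫ r in (-τ)..0,
        (1 + b * max (t + s₁ - r - τ) 0) * (1 + b * max (t + s₂ - r - τ) 0)
      = τ + (b / 2) * (t + s₂)^2 + (b / 2) * (t + s₁)^2
        + (b^2 / 3) * (t + s₁)^3 + (b^2 / 2) * (t + s₁)^2 * (s₂ - s₁) := by
  have hshift : ∀ s r : ℝ, t + s - r - τ = (t + s - τ) - r := fun s r => by ring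
  simp_rw [hshift]
  rw [integral_one_add_max_mul_one_add_max (by linarith) (by linarith) (by linarith)]
  ring

/-- Covariance `R_t(s₁,s₂)` for `x′(t) = b·x(t−τ)` (case `a = 0`) with standard Wiener
initial data, in the range `−s₁ < t ≤ τ − s₂`. -/
theorem covariance_dde_wiener_late_range_a_zero
    (τ b : ℝ) (hτ : 0 < τ) (s₁ s₂ : ℝ)
    (hs₁ : -τ ≤ s₁) (hs₁₂ : s₁ ≤ s₂) (hs₂ : s₂ ≤ 0)
    (t : ℝ) (ht₁ : -s₁ < t) (ht₂ : t ≤ τ - s₂) :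
    ∫ r in (-τ)..0,
        (1 + b * max (t + s₁ - r - τ) 0) * (1 + b * max (t + s₂ - r - τ) 0)
      = τ + (b / 2) * (t + s₂)^2 + (b / 2) * (t + s₁)^2
        + (b^2 / 3) * (t + s₁)^3 + (b^2 / 2) * (t + s₁)^2 * (s₂ - s₁) :=
  covariance_dde_wiener_late_range_a_zero_general τ b s₁ s₂ hs₁₂ t ht₁ ht₂
end

section
/- Let τ > 0, b ∈ ℝ, a ≠ 0, −τ ≤ s₁ ≤ s₂ ≤ 0 and −s₁ < t ≤ τ − s₂. Then ∫_{−τ}^0 ( e^{a(t+s₁)} + (b/a)( e^{a·max(t+s₁−r−τ,0)} − 1 ) )·( e^{a(t+s₂)} + (b/a)( e^{a·max(t+s₂−r−τ,0)} − 1 ) ) dr = e^{a(2t+s₁+s₂)}·τ + (b/a²)·e^{a(t+s₁)}·( e^{a(t+s₂)} − 1 − a(t+s₂) ) + (b/a²)·( e^{a(t+s₂)} − b/a )·( e^{a(t+s₁)} − 1 − a(t+s₁) ) + (b²/(2a³))·e^{a(s₂−s₁)}·( e^{a(t+s₁)} − 1 )². (This is the covariance R_t(s₁, s₂) for the solution of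 x′(t) = a·x(t) + b·x(t−τ) with standard Wiener initial data, in the range t > −s₁.) -/
open MeasureTheory Set Real

/-!
The two ramps `max (t + sᵢ - τ - r) 0` have their kinks at `t + s₁ - τ ≤ t + s₂ - τ` inside
`[-τ, 0]`. Before the first kink both factors of the integrand are affine in `exp (a * x)` for the
shifted variable `x = t + s₁ - τ - r`, between the kinks only the second one is, and after the
second kink the integrand is constant; each piece is then an elementary exponential integral.
-/

theorem integral_mul_max_sub_split {φ ψ : ℝ → ℝ} (hφ : Continuous φ) (hψ : Continuous ψ)
    {p u v q : ℝ} (hpu : p ≤ u) (huv : u ≤ v) (hvq : v ≤ q) :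
    ∫ r in p..q, φ (max (u - r) 0) * ψ (max (v - r) 0)
      = (∫ x in (0 : ℝ)..u - p, φ x * ψ (x + (v - u)))
        + φ 0 * (∫ x in (0 : ℝ)..v - u, ψ x) + (q - v) * (φ 0 * ψ 0) := by
  have hint : ∀ α β : ℝ,
      IntervalIntegrable (fun r => φ (max (u - r) 0) * ψ (max (v - r) 0)) volume α β :=
    fun α β => (by fun_prop : Continuous _).intervalIntegrable α β
  rw [← intervalIntegral.integral_add_adjacent_intervals (hint p u) (hint u q),
    ← intervalIntegral.integral_add_adjacent_intervals (hint u v) (hint v q), ← add_assoc]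
  have early : ∫ r in p..u, φ (max (u - r) 0) * ψ (max (v - r) 0)
      = ∫ r in p..u, (fun x => φ x * ψ (x + (v - u))) (u - r) := by
    refine intervalIntegral.integral_congr fun r hr => ?_
    rw [uIcc_of_le hpu] at hr
    simp only [max_eq_left (sub_nonneg.2 hr.2), max_eq_left (by linarith [hr.2] : 0 ≤ v - r),
      sub_add_sub_cancel']
  have middle : ∫ r in u..v, φ (max (u - r) 0) * ψ (max (v - r) 0)
      = ∫ r in u..v, φ 0 * ψ (v - r) := by
    refine intervalIntegral.integral_congr fun r hr => ?_
    rw [uIcc_of_le huv] at hr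
    simp only [max_eq_right (sub_nonpos.2 hr.1), max_eq_left (sub_nonneg.2 hr.2)]
  have late : ∫ r in v..q, φ (max (u - r) 0) * ψ (max (v - r) 0)
      = ∫ _ in v..q, φ 0 * ψ 0 := by
    refine intervalIntegral.integral_congr fun r hr => ?_
    rw [uIcc_of_le hvq] at hr
    simp only [max_eq_right (by linarith [hr.1] : u - r ≤ 0), max_eq_right (sub_nonpos.2 hr.1)]
  rw [early, middle, late, intervalIntegral.integral_const_mul, intervalIntegral.integral_const,
    intervalIntegral.integral_comp_sub_left (fun x => φ x * ψ (x + (v - u))),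
    intervalIntegral.integral_comp_sub_left (fun x => ψ x), smul_eq_mul, sub_self, sub_self]

theorem integral_affine_exp_mul_affine_exp {a : ℝ} (ha : a ≠ 0) (A B C D L : ℝ) :
    ∫ x in (0 : ℝ)..L, (A + C * exp (a * x)) * (B + D * exp (a * x))
      = A * B * L + (A * D + B * C) * (exp (a * L) - 1) / a
        + C * D * (exp (a * L) ^ 2 - 1) / (2 * a) := by
  have hderiv : ∀ x ∈ uIcc 0 L, HasDerivAt
      (fun x => A * B * x + (A * D + B * C) * exp (a * x) / a + C * D * exp (a * x) ^ 2 / (2 * a))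
      ((A + C * exp (a * x)) * (B + D * exp (a * x))) x := by
    intro x _
    have hexp : HasDerivAt (fun x => exp (a * x)) (exp (a * x) * a) x :=
      ((hasDerivAt_id x).const_mul a).exp.congr_deriv (by simp)
    refine ((((hasDerivAt_id x).const_mul (A * B)).add
      ((hexp.const_mul (A * D + B * C)).div_const a)).add
      (((hexp.pow 2).const_mul (C * D)).div_const (2 * a))).congr_deriv ?_
    field_simp
    ring
  rw [intervalIntegral.integral_eq_sub_of_hasDerivAt hderiv
    ((by fun_prop : Continuous _).intervalIntegrable _ _)]
  simp only [mul_zero, exp_zero]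
  ring

theorem integral_affine_exp {a : ℝ} (ha : a ≠ 0) (B D L : ℝ) :
    ∫ x in (0 : ℝ)..L, (B + D * exp (a * x)) = B * L + D * (exp (a * L) - 1) / a := by
  simpa using integral_affine_exp_mul_affine_exp ha 1 B 0 D L

theorem covariance_dde_wiener_late_range_a_ne_zero_general
    (τ a b : ℝ) (ha : a ≠ 0) (s₁ s₂ : ℝ)
    (hs₁₂ : s₁ ≤ s₂)
    (t : ℝ) (ht₁ : -s₁ < t) (ht₂ : t ≤ τ - s₂) :
    ∫ r in (-τ)..0,
        (Real.exp (a * (t + s₁))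
            + (b / a) * (Real.exp (a * max (t + s₁ - r - τ) 0) - 1))
          * (Real.exp (a * (t + s₂))
              + (b / a) * (Real.exp (a * max (t + s₂ - r - τ) 0) - 1))
      = Real.exp (a * (2 * t + s₁ + s₂)) * τ
        + (b / a^2) * Real.exp (a * (t + s₁))
            * (Real.exp (a * (t + s₂)) - 1 - a * (t + s₂))
        + (b / a^2) * (Real.exp (a * (t + s₂)) - b / a)
            * (Real.exp (a * (t + s₁)) - 1 - a * (t + s₁))
        + (b^2 / (2 * a^3)) * Real.exp (a * (s₂ - s₁))
            * (Real.exp (a * (t + s₁)) - 1)^2 := by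
  have hsplit := integral_mul_max_sub_split
    (p := -τ) (q := 0) (u := t + s₁ - τ) (v := t + s₂ - τ)
    (φ := fun x => exp (a * (t + s₁)) - b / a + b / a * exp (a * x))
    (ψ := fun x => exp (a * (t + s₂)) - b / a + b / a * exp (a * x))
    (by fun_prop) (by fun_prop) (by linarith) (by linarith) (by linarith)
  have hshift : ∀ x,
      b / a * exp (a * (x + (s₂ - s₁))) = b / a * exp (a * (s₂ - s₁)) * exp (a * x) := by
    intro x; rw [mul_add, exp_add]; ring
  have hY : exp (a * (t + s₂)) = exp (a * (s₂ - s₁)) * exp (a * (t + s₁)) := by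
    rw [← exp_add]; ring_nf
  have hXY : exp (a * (2 * t + s₁ + s₂)) = exp (a * (t + s₁)) * exp (a * (t + s₂)) := by
    rw [← exp_add]; ring_nf
  rw [show t + s₁ - τ - -τ = t + s₁ by ring,
    show t + s₂ - τ - (t + s₁ - τ) = s₂ - s₁ by ring] at hsplit
  simp only [hshift, integral_affine_exp_mul_affine_exp ha, integral_affine_exp ha] at hsplit
  calc _ = ∫ r in (-τ)..0,
        (exp (a * (t + s₁)) - b / a + b / a * exp (a * max (t + s₁ - τ - r) 0))
          * (exp (a * (t + s₂)) - b / a + b / a * exp (a * max (t + s₂ - τ - r) 0)) := by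
        congr 1; funext r; rw [sub_right_comm _ r τ, sub_right_comm _ r τ]; ring
    _ = _ := by
      rw [hsplit, hXY, hY]
      simp only [mul_zero, exp_zero]
      field_simp
      ring

/-- Covariance `R_t(s₁,s₂)` for `x′(t) = a·x(t) + b·x(t−τ)` (case `a ≠ 0`) with standard
Wiener initial data, in the range `−s₁ < t ≤ τ − s₂`. -/
theorem covariance_dde_wiener_late_range_a_ne_zero
    (τ a b : ℝ) (hτ : 0 < τ) (ha : a ≠ 0) (s₁ s₂ : ℝ)
    (hs₁ : -τ ≤ s₁) (hs₁₂ : s₁ ≤ s₂) (hs₂ : s₂ ≤ 0)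
    (t : ℝ) (ht₁ : -s₁ < t) (ht₂ : t ≤ τ - s₂) :
    ∫ r in (-τ)..0,
        (Real.exp (a * (t + s₁))
            + (b / a) * (Real.exp (a * max (t + s₁ - r - τ) 0) - 1))
          * (Real.exp (a * (t + s₂))
              + (b / a) * (Real.exp (a * max (t + s₂ - r - τ) 0) - 1))
      = Real.exp (a * (2 * t + s₁ + s₂)) * τ
        + (b / a^2) * Real.exp (a * (t + s₁))
            * (Real.exp (a * (t + s₂)) - 1 - a * (t + s₂))
        + (b / a^2) * (Real.exp (a * (t + s₂)) - b / a)
            * (Real.exp (a * (t + s₁)) - 1 - a * (t + s₁))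
        + (b^2 / (2 * a^3)) * Real.exp (a * (s₂ - s₁))
            * (Real.exp (a * (t + s₁)) - 1)^2 :=
  covariance_dde_wiener_late_range_a_ne_zero_general τ a b ha s₁ s₂ hs₁₂ t ht₁ ht₂
end
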